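/- Let π be a uniformizer of F and let u ∈ 𝒪^× be a unit whose residue res(u) is not a square in 𝔽. Then the product {u}·{π} is nonzero in k^M(F), i.e. {u}·{π} ∉ J. -/

import Mathlib

/-- A nondyadic `p`-adic field packaged as data: a field `F` of characteristic zero,
complete with respect to a surjective discrete valuation `v : Fˣ → ℤ`, with valuation
ring `O`, residue field `K` (finite of odd cardinality in applications), and residue
(quotient) map `res : O →+* K` whose kernel is the maximal ideal `𝔪 = {x : v x ≥ 1}`. -/
structure PadicData (F K : Type) [Field F] [Field K] where
  v : Fˣ → ℤ
  v_mul : ∀ x y : Fˣ, v (x * y) = v x + v y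
  v_surj : Function.Surjective v
  v_ultra : ∀ (x y : Fˣ) (h : (x : F) + (y : F) ≠ 0),
      min (v x) (v y) ≤ v (Units.mk0 ((x : F) + (y : F)) h)
  O : Subring F
  mem_O : ∀ x : F, x ∈ O ↔ ∀ h : x ≠ 0, 0 ≤ v (Units.mk0 x h)
  res : O →+* K
  res_surj : Function.Surjective res
  res_eq_zero : ∀ x : O, res x = 0 ↔ ∀ h : (x : F) ≠ 0, 1 ≤ v (Units.mk0 (x : F) h)
  complete : ∀ f : ℕ → F,
      (∀ N : ℤ, ∃ M : ℕ, ∀ m, M ≤ m → ∀ n, M ≤ n → ∀ h : f m - f n ≠ 0,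
        N ≤ v (Units.mk0 (f m - f n) h)) →
      ∃ a : F, ∀ N : ℤ, ∃ M : ℕ, ∀ n, M ≤ n → ∀ h : f n - a ≠ 0,
        N ≤ v (Units.mk0 (f n - a) h)
/-- The defining relations of mod 2 Milnor K-theory on the tensor algebra
`T(F^×)` (over `ℤ`, with `F^×` written additively): the Steinberg elements
`{a}·{1−a}` for `a ∈ F^× \ {1}` are set to `0`, and `2·1` is set to `0`.
Quotienting by `MilnorRel` realizes the quotient by the two-sided ideal `J`
generated by these elements. -/
inductive MilnorRel (F : Type) [Field F] :
    TensorAlgebra ℤ (Additive Fˣ) → TensorAlgebra ℤ (Additive Fˣ) → Prop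
  | steinberg (a : Fˣ) (h : (1 : F) - (a : F) ≠ 0) :
      MilnorRel F
        (TensorAlgebra.ι ℤ (Additive.ofMul a) *
          TensorAlgebra.ι ℤ (Additive.ofMul (Units.mk0 ((1 : F) - (a : F)) h))) 0
  | mod2 : MilnorRel F (2 : TensorAlgebra ℤ (Additive Fˣ)) 0

/-- Mod 2 Milnor K-theory `k^M(F) = T(F^×)/J`. -/
abbrev MilnorK (F : Type) [Field F] := RingQuot (MilnorRel F)

/-- The degree-one class `{a}` of `a ∈ F^×` in mod 2 Milnor K-theory. -/
noncomputable def kcls {F : Type} [Field F] (a : Fˣ) : MilnorK F :=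
  RingQuot.mkRingHom (MilnorRel F) (TensorAlgebra.ι ℤ (Additive.ofMul a))

/-!
The mod 2 tame symbol detects `{u}·{π}`. Send `{a}` to the pair `(m, c)` where `m = v(a) mod 2`
and `c` records whether the residue of the unit part `a π^{-v(a)}` is a nonsquare, and send a
product of two degree-one classes to `m n s + m d + n c`, where `s` records whether `-1` is a
nonsquare in `𝔽`. Upper nilpotent `4 × 4` matrices over `ℤ/2` realise this truncated graded ring,
so the assignment extends to a ring homomorphism on `T(F^×)`. It kills `2` and, by a case
analysis on the valuations of `a` and `1 - a`, every Steinberg element `{a}·{1-a}`; and it sends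
`{u}·{π}` to `0·1·s + 0·0 + 1·1 = 1`.
-/

open Classical in
noncomputable def sqClass {K : Type} [Field K] (x : K) : ZMod 2 :=
  if IsSquare x then 0 else 1

lemma sqClass_mul {K : Type} [Field K] [Fintype K] {x y : K} (hx : x ≠ 0) (hy : y ≠ 0) :
    sqClass (x * y) = sqClass x + sqClass y := by
  classical
  have hχ : ∀ {z : K}, z ≠ 0 → sqClass z = if quadraticChar K z = 1 then 0 else 1 :=
    fun hz => by simp only [sqClass, quadraticChar_one_iff_isSquare hz]; congr
  rw [hχ (mul_ne_zero hx hy), hχ hx, hχ hy, map_mul]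
  rcases quadraticChar_dichotomy hx with h | h <;> rcases quadraticChar_dichotomy hy with h' | h' <;>
    simp only [h, h'] <;> decide

/-- Row `(m, c)` times column `(n s + d, n)` puts `m n s + m d + n c` in the corner of a product. -/
def symbolMatrix {R : Type} [CommRing R] (s m c : R) : Matrix (Fin 4) (Fin 4) R :=
  !![0, m, c, 0; 0, 0, 0, m * s + c; 0, 0, 0, m; 0, 0, 0, 0]

lemma symbolMatrix_add {R : Type} [CommRing R] (s m c n d : R) :
    symbolMatrix s (m + n) (c + d) = symbolMatrix s m c + symbolMatrix s n d := by
  ext i j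
  fin_cases i <;> fin_cases j <;> simp [symbolMatrix]; ring

lemma symbolMatrix_mul {R : Type} [CommRing R] (s m c n d : R) :
    symbolMatrix s m c * symbolMatrix s n d = Matrix.single 0 3 (m * n * s + m * d + n * c) := by
  ext i j
  fin_cases i <;> fin_cases j <;> simp [symbolMatrix, Matrix.mul_apply, Fin.sum_univ_four]; ring

namespace PadicData

variable {F K : Type} [Field F] [Field K] (D : PadicData F K)

def valHom : Fˣ →* Multiplicative ℤ :=
  MonoidHom.mk' (fun a => .ofAdd (D.v a)) fun a b => congrArg _ (D.v_mul a b)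

lemma v_one : D.v 1 = 0 :=
  congrArg Multiplicative.toAdd (map_one D.valHom)

lemma v_inv (a : Fˣ) : D.v a⁻¹ = -D.v a :=
  congrArg Multiplicative.toAdd (map_inv D.valHom a)

lemma v_zpow (a : Fˣ) (k : ℤ) : D.v (a ^ k) = k * D.v a :=
  congrArg Multiplicative.toAdd (map_zpow D.valHom a k)

lemma v_neg (a : Fˣ) : D.v (-a) = D.v a := by
  have h := D.v_mul (-1) (-1)
  rw [neg_one_mul, neg_neg, v_one] at h
  rw [← neg_one_mul, D.v_mul]
  omega

lemma min_v_le_of_add_eq {x y c : Fˣ} (e : (x : F) + y = c) : min (D.v x) (D.v y) ≤ D.v c := by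
  have h := D.v_ultra x y (e ▸ c.ne_zero)
  rwa [show Units.mk0 _ _ = c from Units.ext e] at h

lemma v_eq_of_add_eq_of_lt {x y c : Fˣ} (e : (x : F) + y = c) (hlt : D.v x < D.v y) :
    D.v c = D.v x := by
  have hc := D.min_v_le_of_add_eq e
  have hx := D.min_v_le_of_add_eq (x := c) (y := -y) (c := x) (by rw [← e]; simp)
  rw [v_neg] at hx
  omega

lemma mem_O_of_nonneg {a : Fˣ} (ha : 0 ≤ D.v a) : (a : F) ∈ D.O :=
  (D.mem_O a).2 fun _ => by rwa [Units.mk0_val]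

lemma res_eq_zero_of_pos {a : Fˣ} (ha : 0 < D.v a) (hm : (a : F) ∈ D.O) :
    D.res ⟨a, hm⟩ = 0 :=
  (D.res_eq_zero _).2 fun _ => by rwa [Units.mk0_val]

lemma res_ne_zero_of_v_eq_zero {a : Fˣ} (ha : D.v a = 0) (hm : (a : F) ∈ D.O) :
    D.res ⟨a, hm⟩ ≠ 0 := fun h => by
  have := (D.res_eq_zero _).1 h a.ne_zero
  rw [Units.mk0_val] at this
  omega

variable {π : Fˣ}

def unitPart (π a : Fˣ) : Fˣ := a * π ^ (-D.v a)

lemma v_unitPart (hπ : D.v π = 1) (a : Fˣ) : D.v (D.unitPart π a) = 0 := by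
  rw [unitPart, D.v_mul, v_zpow, hπ]
  ring

lemma unitPart_mul (a b : Fˣ) : D.unitPart π (a * b) = D.unitPart π a * D.unitPart π b := by
  rw [unitPart, unitPart, unitPart, D.v_mul, neg_add, zpow_add, mul_mul_mul_comm]

lemma unitPart_of_v_eq_zero {a : Fˣ} (ha : D.v a = 0) : D.unitPart π a = a := by
  rw [unitPart, ha, neg_zero, zpow_zero, mul_one]

def angularComponent (hπ : D.v π = 1) (a : Fˣ) : K :=
  D.res ⟨D.unitPart π a, D.mem_O_of_nonneg (D.v_unitPart hπ a).ge⟩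

lemma angularComponent_ne_zero (hπ : D.v π = 1) (a : Fˣ) : D.angularComponent hπ a ≠ 0 :=
  D.res_ne_zero_of_v_eq_zero (D.v_unitPart hπ a) _

lemma angularComponent_mul (hπ : D.v π = 1) (a b : Fˣ) :
    D.angularComponent hπ (a * b) = D.angularComponent hπ a * D.angularComponent hπ b := by
  rw [angularComponent, angularComponent, angularComponent, ← map_mul]
  exact congrArg D.res (Subtype.ext (congrArg Units.val (D.unitPart_mul a b)))

lemma angularComponent_of_v_eq_zero (hπ : D.v π = 1) {a : Fˣ} (ha : D.v a = 0)
    (hm : (a : F) ∈ D.O) :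
    D.angularComponent hπ a = D.res ⟨a, hm⟩ :=
  congrArg D.res (Subtype.ext (congrArg Units.val (D.unitPart_of_v_eq_zero ha)))

def valParity (a : Fˣ) : ZMod 2 := D.v a

lemma valParity_mul (a b : Fˣ) : D.valParity (a * b) = D.valParity a + D.valParity b := by
  rw [valParity, valParity, valParity, D.v_mul, Int.cast_add]

noncomputable def unitSqClass (hπ : D.v π = 1) (a : Fˣ) : ZMod 2 :=
  sqClass (D.angularComponent hπ a)

lemma unitSqClass_mul [Fintype K] (hπ : D.v π = 1) (a b : Fˣ) :
    D.unitSqClass hπ (a * b) = D.unitSqClass hπ a + D.unitSqClass hπ b := by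
  rw [unitSqClass, unitSqClass, unitSqClass, angularComponent_mul]
  exact sqClass_mul (D.angularComponent_ne_zero hπ a) (D.angularComponent_ne_zero hπ b)

lemma unitSqClass_of_v_eq_zero (hπ : D.v π = 1) {a : Fˣ} (ha : D.v a = 0)
    (hm : (a : F) ∈ D.O) :
    D.unitSqClass hπ a = sqClass (D.res ⟨a, hm⟩) := by
  rw [unitSqClass, angularComponent_of_v_eq_zero D hπ ha hm]

section Steinberg

variable {a b : Fˣ}

lemma v_eq_zero_of_add_eq_one_of_pos (hab : (a : F) + b = 1) (ha : 0 < D.v a) : D.v b = 0 := by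
  have e : ((1 : Fˣ) : F) + ((-a : Fˣ) : F) = b := by simp [← hab]
  rw [D.v_eq_of_add_eq_of_lt e (by rwa [v_neg, v_one]), v_one]

lemma v_eq_of_add_eq_one_of_neg (hab : (a : F) + b = 1) (ha : D.v a < 0) : D.v b = D.v a := by
  have e : ((-a : Fˣ) : F) + ((1 : Fˣ) : F) = b := by simp [← hab]
  rw [D.v_eq_of_add_eq_of_lt e (by rwa [v_neg, v_one]), v_neg]

lemma unitSqClass_eq_zero_of_add_eq_one_of_pos (hπ : D.v π = 1) (hab : (a : F) + b = 1)
    (ha : 0 < D.v a) :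
    D.unitSqClass hπ b = 0 := by
  have hb := D.v_eq_zero_of_add_eq_one_of_pos hab ha
  have hma := D.mem_O_of_nonneg ha.le
  have hmb := D.mem_O_of_nonneg hb.ge
  have hres : D.res ⟨b, hmb⟩ = 1 := by
    rw [show (⟨b, hmb⟩ : D.O) = 1 - ⟨a, hma⟩ from Subtype.ext (eq_sub_of_add_eq' hab), map_sub,
      map_one, D.res_eq_zero_of_pos ha hma, sub_zero]
  rw [D.unitSqClass_of_v_eq_zero hπ hb hmb, hres, sqClass, if_pos IsSquare.one]

/-- Writing `b = a · (a⁻¹ - 1)`, the second factor has residue `-1`. -/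
lemma unitSqClass_eq_add_of_add_eq_one_of_neg [Fintype K] (hπ : D.v π = 1)
    (hab : (a : F) + b = 1) (ha : D.v a < 0) :
    D.unitSqClass hπ b = D.unitSqClass hπ a + sqClass (-1 : K) := by
  have hb := D.v_eq_of_add_eq_one_of_neg hab ha
  have hv : D.v (b * a⁻¹) = 0 := by rw [D.v_mul, v_inv, hb, add_neg_cancel]
  have hpos : 0 < D.v a⁻¹ := by rw [v_inv]; omega
  have hmi := D.mem_O_of_nonneg hpos.le
  have hm := D.mem_O_of_nonneg hv.ge
  have hres : D.res ⟨(b * a⁻¹ : Fˣ), hm⟩ = -1 := by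
    have e : (⟨(b * a⁻¹ : Fˣ), hm⟩ : D.O) = ⟨(a⁻¹ : Fˣ), hmi⟩ - 1 := by
      refine Subtype.ext ?_
      show ((b * a⁻¹ : Fˣ) : F) = ((a⁻¹ : Fˣ) : F) - 1
      rw [Units.val_mul, Units.val_inv_eq_inv_val, eq_sub_of_add_eq' hab, sub_mul, one_mul,
        mul_inv_cancel₀ a.ne_zero]
    rw [e, map_sub, map_one, D.res_eq_zero_of_pos hpos hmi, zero_sub]
  rw [show b = a * (b * a⁻¹) by rw [mul_comm b, mul_inv_cancel_left], unitSqClass_mul,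
    D.unitSqClass_of_v_eq_zero hπ hv hm, hres]

lemma steinberg_relation_of_v_ne_zero [Fintype K] (hπ : D.v π = 1) (hab : (a : F) + b = 1)
    (ha : D.v a ≠ 0) :
    D.valParity a * D.valParity b * sqClass (-1 : K) + D.valParity a * D.unitSqClass hπ b
      + D.valParity b * D.unitSqClass hπ a = 0 := by
  rcases ha.lt_or_gt with ha | ha
  · have hm : D.valParity b = D.valParity a :=
      congrArg Int.cast (D.v_eq_of_add_eq_one_of_neg hab ha)
    rw [D.unitSqClass_eq_add_of_add_eq_one_of_neg hπ hab ha, hm]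
    generalize D.valParity a = m, D.unitSqClass hπ a = c, sqClass (-1 : K) = s
    revert m c s
    decide
  · simp [valParity, D.v_eq_zero_of_add_eq_one_of_pos hab ha,
      D.unitSqClass_eq_zero_of_add_eq_one_of_pos hπ hab ha]

lemma steinberg_relation [Fintype K] (hπ : D.v π = 1) (hab : (a : F) + b = 1) :
    D.valParity a * D.valParity b * sqClass (-1 : K) + D.valParity a * D.unitSqClass hπ b
      + D.valParity b * D.unitSqClass hπ a = 0 := by
  by_cases ha : D.v a = 0
  · by_cases hb : D.v b = 0
    · simp [valParity, ha, hb]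
    · linear_combination D.steinberg_relation_of_v_ne_zero hπ ((add_comm _ _).trans hab) hb
  · exact D.steinberg_relation_of_v_ne_zero hπ hab ha

end Steinberg

variable [Fintype K]

noncomputable def symbolHom (hπ : D.v π = 1) : Additive Fˣ →+ Matrix (Fin 4) (Fin 4) (ZMod 2) :=
  AddMonoidHom.mk' (fun a => symbolMatrix (sqClass (-1 : K)) (D.valParity a.toMul)
      (D.unitSqClass hπ a.toMul))
    fun a b => by simp only [toMul_add, valParity_mul, unitSqClass_mul, symbolMatrix_add]

noncomputable def tameSymbol (hπ : D.v π = 1) : MilnorK F →+* Matrix (Fin 4) (Fin 4) (ZMod 2) :=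
  RingQuot.lift ⟨(TensorAlgebra.lift ℤ (D.symbolHom hπ).toIntLinearMap).toRingHom, by
    rintro x y (⟨a, h⟩ | _)
    · simp [symbolHom, symbolMatrix_mul,
        D.steinberg_relation hπ (b := Units.mk0 _ h) (add_sub_cancel (a : F) 1)]
    · simp only [AlgHom.toRingHom_eq_coe, map_ofNat, map_zero]
      exact CharTwo.two_eq_zero⟩

lemma tameSymbol_kcls (hπ : D.v π = 1) (a : Fˣ) :
    D.tameSymbol hπ (kcls a) =
      symbolMatrix (sqClass (-1 : K)) (D.valParity a) (D.unitSqClass hπ a) := by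
  simp [tameSymbol, kcls, RingQuot.lift_mkRingHom_apply, symbolHom]

end PadicData

theorem milnor_u_pi_ne_zero_general {F K : Type} [Field F] [Field K] [Fintype K]
    (D : PadicData F K)
    (π : Fˣ) (hπ : D.v π = 1)
    (u : Fˣ) (hu0 : D.v u = 0) (humem : (u : F) ∈ D.O)
    (hu : ¬ ∃ b : K, b * b = D.res ⟨(u : F), humem⟩) :
    kcls u * kcls π ≠ 0 := by
  have hcu : D.unitSqClass hπ u = 1 := by
    rw [D.unitSqClass_of_v_eq_zero hπ hu0 humem, sqClass, if_neg]
    rintro ⟨r, hr⟩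
    exact hu ⟨r, hr.symm⟩
  intro h
  have hcorner := congrArg (fun M => M 0 3) (congrArg (D.tameSymbol hπ) h)
  simp [PadicData.tameSymbol_kcls, symbolMatrix_mul, PadicData.valParity, hu0, hπ, hcu] at hcorner

/-- `{u}·{π} ≠ 0` in `k^M(F)` for a uniformizer `π` and a unit `u`
whose residue is a nonsquare. -/
theorem milnor_u_pi_ne_zero {F K : Type} [Field F] [CharZero F] [Field K] [Fintype K]
    (D : PadicData F K) (hodd : Odd (Fintype.card K))
    (π : Fˣ) (hπ : D.v π = 1)
    (u : Fˣ) (hu0 : D.v u = 0) (humem : (u : F) ∈ D.O)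
    (hu : ¬ ∃ b : K, b * b = D.res ⟨(u : F), humem⟩) :
    kcls u * kcls π ≠ 0 :=
  milnor_u_pi_ne_zero_general D π hπ u hu0 humem hu
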